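/- Let TA = (L, L₀, ∅, Σ, CX, I, E) be a timed automaton with an empty set of urgent locations, and define f on states by f((l,ν)) = (l,ν) if ν ⊨ I(l) and f((l,ν)) = (l_u, ν) otherwise. Then for every state (l,ν) of TS'(TA): (l,ν) is reachable in TS'(TA) if and only if f((l,ν)) is reachable in TS(INV(TA)). -/

import Mathlib

/-!
Framework for timed automata.  Clock valuations assign non-negative reals to
clocks.  Guards and location invariants are represented semantically, as
predicates on clock valuations.
-/

/-- Clock valuations: each clock gets a non-negative real. -/
abbrev Val (C : Type) := C → NNReal

/-- The valuation `ν₀` assigning `0` to every clock. -/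
def zeroVal {C : Type} : Val C := fun _ => 0

open Classical in
/-- `ν[λ := 0]`: reset the clocks in `lam` to zero. -/
noncomputable def resetVal {C : Type} (ν : Val C) (lam : Set C) : Val C :=
  fun x => if x ∈ lam then 0 else ν x

/-- `ν + δ`: advance every clock by `δ`. -/
def shift {C : Type} (ν : Val C) (δ : NNReal) : Val C := fun x => ν x + δ

/-- A timed automaton `TA = (L, L₀, L_u, Σ, CX, I, E)` with location type `L`,
action alphabet `A` and clock type `C`:  a set of initial locations (nonempty),
a set of urgent locations, an invariant map, and a set of edges
`(l, a, φ, λ, l')` consisting of source, action, guard, reset set and target. -/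
structure TA (L A C : Type) where
  init : Set L
  init_nonempty : init.Nonempty
  urgent : Set L
  inv : L → Val C → Prop
  edges : Set (L × A × (Val C → Prop) × Set C × L)

/-- States of the associated transition systems: location/valuation pairs. -/
abbrev State (L C : Type) := L × Val C

/-- Initial states: initial locations paired with the zero valuation. -/
def TA.initStates {L A C : Type} (T : TA L A C) : Set (State L C) :=
  {p | p.1 ∈ T.init ∧ p.2 = zeroVal}

/-- Baseline semantics `TS(TA)`.  Labels are `Sum.inl a` for actions `a ∈ Σ`
and `Sum.inr δ` for delays `δ ∈ ℝ≥0`.  Action transitions require the target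
invariant to hold; delay transitions require the source location not to be
urgent and the invariant to hold throughout the delay. -/
def TS {L A C : Type} (T : TA L A C) :
    State L C → (A ⊕ NNReal) → State L C → Prop := fun p α q =>
  match α with
  | Sum.inl a => ∃ φ lam, (p.1, a, φ, lam, q.1) ∈ T.edges ∧ φ p.2 ∧
      q.2 = resetVal p.2 lam ∧ T.inv q.1 q.2
  | Sum.inr δ => p.1 ∉ T.urgent ∧ q.1 = p.1 ∧ q.2 = shift p.2 δ ∧
      ∀ k ≤ δ, T.inv p.1 (shift p.2 k)

/-- Unsatisfied-invariants semantics `TS'(TA)`: like `TS(TA)` except action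
transitions do not require the target invariant to hold. -/
def TS' {L A C : Type} (T : TA L A C) :
    State L C → (A ⊕ NNReal) → State L C → Prop := fun p α q =>
  match α with
  | Sum.inl a => ∃ φ lam, (p.1, a, φ, lam, q.1) ∈ T.edges ∧ φ p.2 ∧
      q.2 = resetVal p.2 lam
  | Sum.inr δ => p.1 ∉ T.urgent ∧ q.1 = p.1 ∧ q.2 = shift p.2 δ ∧
      ∀ k ≤ δ, T.inv p.1 (shift p.2 k)

/-- Reachable states: smallest set containing the initial states and closed
under the transition relation. -/
inductive Reachable {S Λ : Type} (init : Set S) (tr : S → Λ → S → Prop) : S → Prop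
  | base {s : S} : s ∈ init → Reachable init tr s
  | step {s : S} {α : Λ} {s' : S} :
      Reachable init tr s → tr s α s' → Reachable init tr s'

/-- The construction `INV(TA)` (for `TA` with no urgent locations).  Locations
are `L ⊕ L`: `Sum.inl l` is the original location `l`, `Sum.inr l` is its fresh
urgent copy `l_u`.  For each original edge `(l, a, φ, λ, l')`, four edges are
introduced, with guards `φ₁ = φ ∧ resetPred(I(l'), λ)` (semantically:
`φ ν ∧ I(l')(ν[λ:=0])`) and `φ₂ = φ ∧ ¬resetPred(I(l'), λ)`. -/
noncomputable def INV {L A C : Type} (T : TA L A C) : TA (L ⊕ L) A C where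
  init := Sum.inl '' {l | l ∈ T.init ∧ T.inv l zeroVal} ∪
          Sum.inr '' {l | l ∈ T.init ∧ ¬ T.inv l zeroVal}
  init_nonempty := by
    obtain ⟨l, hl⟩ := T.init_nonempty
    by_cases h : T.inv l zeroVal
    · exact ⟨Sum.inl l, Set.mem_union_left _ (Set.mem_image_of_mem _ ⟨hl, h⟩)⟩
    · exact ⟨Sum.inr l, Set.mem_union_right _ (Set.mem_image_of_mem _ ⟨hl, h⟩)⟩
  urgent := Set.range Sum.inr
  inv := fun l' ν =>
    match l' with
    | Sum.inl l => T.inv l ν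
    | Sum.inr _ => True
  edges := { e | ∃ l a φ lam l', (l, a, φ, lam, l') ∈ T.edges ∧
      (e = (Sum.inl l, a, fun ν => φ ν ∧ T.inv l' (resetVal ν lam), lam, Sum.inl l') ∨
       e = (Sum.inl l, a, fun ν => φ ν ∧ ¬ T.inv l' (resetVal ν lam), lam, Sum.inr l') ∨
       e = (Sum.inr l, a, fun ν => φ ν ∧ T.inv l' (resetVal ν lam), lam, Sum.inl l') ∨
       e = (Sum.inr l, a, fun ν => φ ν ∧ ¬ T.inv l' (resetVal ν lam), lam, Sum.inr l')) }

open Classical in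
/-- The map `f` on states: `f((l,ν)) = (l,ν)` if `ν ⊨ I(l)`, and
`f((l,ν)) = (l_u, ν)` otherwise. -/
noncomputable def fINV {L A C : Type} (T : TA L A C) :
    State L C → State (L ⊕ L) C := fun p =>
  if T.inv p.1 p.2 then (Sum.inl p.1, p.2) else (Sum.inr p.1, p.2)

/-!
`fINV` is a functional bisimulation from `TS'(TA)` onto `TS(INV(TA))`: it is injective, maps the
initial states onto the initial states, and an `INV(TA)`-transition out of `fINV p` is exactly the
image of a `TS'(TA)`-transition out of `p`.  For an action the second conjunct of the guard of the
`INV(TA)`-edge decides whether its target is the original location or its urgent copy, which is how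
`fINV` labels the target state; a delay is impossible from an urgent copy and, from an original
location, requires the invariant throughout, as in `TS'(TA)` where no location is urgent.
-/

namespace Reachable

variable {S S' Λ : Type} {init : Set S} {tr : S → Λ → S → Prop}
  {init' : Set S'} {tr' : S' → Λ → S' → Prop} {f : S → S'}

theorem map (hinit : Set.MapsTo f init init')
    (htr : ∀ {s α s'}, tr s α s' → tr' (f s) α (f s')) {s : S}
    (h : Reachable init tr s) : Reachable init' tr' (f s) := by
  induction h with
  | base hs => exact base (hinit hs)
  | step _ hst ih => exact step ih (htr hst)

theorem exists_of_map (hinit : init' ⊆ f '' init)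
    (htr : ∀ {s α t}, tr' (f s) α t → ∃ s', f s' = t ∧ tr s α s') {t : S'}
    (h : Reachable init' tr' t) : ∃ s, f s = t ∧ Reachable init tr s := by
  induction h with
  | base ht =>
    obtain ⟨s, hs, rfl⟩ := hinit ht
    exact ⟨s, rfl, base hs⟩
  | step _ htt' ih =>
    obtain ⟨s, rfl, hs⟩ := ih
    obtain ⟨s', rfl, hss'⟩ := htr htt'
    exact ⟨s', rfl, step hs hss'⟩

theorem map_iff (hf : Function.Injective f) (hinit : f '' init = init')
    (htr : ∀ s α t, tr' (f s) α t ↔ ∃ s', f s' = t ∧ tr s α s') (s : S) :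
    Reachable init' tr' (f s) ↔ Reachable init tr s := by
  refine ⟨fun h => ?_, map (hinit ▸ Set.mapsTo_image f init) fun h => (htr ..).2 ⟨_, rfl, h⟩⟩
  obtain ⟨s', hs', h'⟩ := exists_of_map hinit.ge (htr ..).1 h
  exact hf hs' ▸ h'

end Reachable

section INV

variable {L A C : Type} (T : TA L A C)

lemma shift_zero (ν : Val C) : shift ν 0 = ν := by
  funext x
  simp [shift]

lemma fINV_of_inv {l : L} {ν : Val C} (h : T.inv l ν) : fINV T (l, ν) = (Sum.inl l, ν) := by
  simp [fINV, h]

lemma fINV_of_not_inv {l : L} {ν : Val C} (h : ¬ T.inv l ν) :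
    fINV T (l, ν) = (Sum.inr l, ν) := by
  simp [fINV, h]

lemma fINV_injective : Function.Injective (fINV T) := by
  rintro ⟨l, ν⟩ ⟨l', ν'⟩ h
  unfold fINV at h
  split_ifs at h <;> simp_all

lemma fINV_snd (p : State L C) : (fINV T p).2 = p.2 := by
  unfold fINV
  split_ifs <;> rfl

lemma INV_inv_fINV (p : State L C) : (INV T).inv (fINV T p).1 (fINV T p).2 := by
  unfold fINV
  split_ifs <;> simp [INV, *]

lemma image_fINV_initStates : fINV T '' T.initStates = (INV T).initStates := by
  ext ⟨s, ν⟩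
  simp only [TA.initStates, INV, Set.mem_image, Set.mem_ofPred_eq, Set.mem_union, Prod.exists]
  constructor
  · rintro ⟨l, _, ⟨hl, rfl⟩, h⟩
    by_cases hi : T.inv l zeroVal
    · rw [fINV_of_inv T hi, Prod.mk.injEq] at h
      obtain ⟨rfl, rfl⟩ := h
      exact ⟨Or.inl ⟨l, ⟨hl, hi⟩, rfl⟩, rfl⟩
    · rw [fINV_of_not_inv T hi, Prod.mk.injEq] at h
      obtain ⟨rfl, rfl⟩ := h
      exact ⟨Or.inr ⟨l, ⟨hl, hi⟩, rfl⟩, rfl⟩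
  · rintro ⟨⟨l, ⟨hl, hi⟩, rfl⟩ | ⟨l, ⟨hl, hi⟩, rfl⟩, rfl⟩
    · exact ⟨l, zeroVal, ⟨hl, rfl⟩, fINV_of_inv T hi⟩
    · exact ⟨l, zeroVal, ⟨hl, rfl⟩, fINV_of_not_inv T hi⟩

lemma exists_INV_edge_fINV {l l' : L} {a : A} {φ : Val C → Prop} {lam : Set C}
    (he : (l, a, φ, lam, l') ∈ T.edges) {ν : Val C} (hφ : φ ν) :
    ∃ ψ : Val C → Prop,
      ((fINV T (l, ν)).1, a, ψ, lam, (fINV T (l', resetVal ν lam)).1) ∈ (INV T).edges ∧ ψ ν := by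
  unfold fINV
  split_ifs
  · exact ⟨_, ⟨l, a, φ, lam, l', he, Or.inl rfl⟩, hφ, ‹_›⟩
  · exact ⟨_, ⟨l, a, φ, lam, l', he, Or.inr (Or.inl rfl)⟩, hφ, ‹_›⟩
  · exact ⟨_, ⟨l, a, φ, lam, l', he, Or.inr (Or.inr (Or.inl rfl))⟩, hφ, ‹_›⟩
  · exact ⟨_, ⟨l, a, φ, lam, l', he, Or.inr (Or.inr (Or.inr rfl))⟩, hφ, ‹_›⟩

lemma exists_edge_of_INV_edge {l : L} {ν : Val C} {a : A} {ψ : Val C → Prop} {lam : Set C}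
    {t : L ⊕ L} (he : ((fINV T (l, ν)).1, a, ψ, lam, t) ∈ (INV T).edges) (hψ : ψ ν) :
    ∃ φ l', (l, a, φ, lam, l') ∈ T.edges ∧ φ ν ∧ (fINV T (l', resetVal ν lam)).1 = t := by
  obtain ⟨l₀, a₀, φ, lam₀, l', he₀, hcases⟩ := he
  unfold fINV at hcases
  split_ifs at hcases <;> rcases hcases with h | h | h | h <;>
    simp only [Prod.mk.injEq, reduceCtorEq, Sum.inl.injEq, Sum.inr.injEq, false_and] at h <;>
    obtain ⟨rfl, rfl, rfl, rfl, rfl⟩ := h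
  all_goals exact ⟨φ, l', he₀, hψ.1, by simp [fINV, hψ.2]⟩

lemma TS_INV_fINV_action_iff {p : State L C} {q : State (L ⊕ L) C} {a : A} :
    TS (INV T) (fINV T p) (.inl a) q ↔ ∃ p', fINV T p' = q ∧ TS' T p (.inl a) p' := by
  obtain ⟨l, ν⟩ := p
  constructor
  · rintro ⟨ψ, lam, he, hψ, hq, -⟩
    rw [fINV_snd] at hψ hq
    obtain ⟨φ, l', he', hφ, ht⟩ := exists_edge_of_INV_edge T he hψ
    exact ⟨(l', q.2), Prod.ext (hq ▸ ht) (fINV_snd T _), φ, lam, he', hφ, hq⟩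
  · rintro ⟨⟨l', ν'⟩, rfl, φ, lam, he, hφ, rfl⟩
    obtain ⟨ψ, he', hψ⟩ := exists_INV_edge_fINV T he hφ
    exact ⟨ψ, lam, he', by rwa [fINV_snd], by simp only [fINV_snd], INV_inv_fINV T _⟩

lemma TS_INV_fINV_delay_iff {p : State L C} {q : State (L ⊕ L) C} {δ : NNReal}
    (hp : p.1 ∉ T.urgent) :
    TS (INV T) (fINV T p) (.inr δ) q ↔ ∃ p', fINV T p' = q ∧ TS' T p (.inr δ) p' := by
  obtain ⟨l, ν⟩ := p
  constructor
  · rintro ⟨hnu, hq1, hq2, hall⟩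
    have hi : T.inv l ν := by
      by_contra hi
      rw [fINV_of_not_inv T hi] at hnu
      exact hnu ⟨l, rfl⟩
    rw [fINV_of_inv T hi] at hq1 hq2 hall
    refine ⟨(l, shift ν δ), ?_, hp, rfl, rfl, hall⟩
    rw [fINV_of_inv T (hall δ le_rfl)]
    exact Prod.ext hq1.symm hq2.symm
  · rintro ⟨⟨l', ν'⟩, rfl, -, hl, hν, hall⟩
    obtain rfl : l = l' := hl.symm
    obtain rfl : ν' = shift ν δ := hν
    have hi : T.inv l ν := shift_zero ν ▸ hall 0 zero_le
    rw [fINV_of_inv T hi, fINV_of_inv T (hall δ le_rfl)]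
    exact ⟨by simp [INV], rfl, rfl, hall⟩

lemma TS_INV_fINV_iff (hu : T.urgent = ∅) (p : State L C) (α : A ⊕ NNReal)
    (q : State (L ⊕ L) C) :
    TS (INV T) (fINV T p) α q ↔ ∃ p', fINV T p' = q ∧ TS' T p α p' := by
  cases α with
  | inl a => exact TS_INV_fINV_action_iff T
  | inr δ => exact TS_INV_fINV_delay_iff T (hu ▸ Set.notMem_empty _)

end INV

theorem statement_6_general {L A C : Type}
    (T : TA L A C) (hu : T.urgent = ∅) :
    ∀ (l : L) (ν : Val C),
      Reachable T.initStates (TS' T) (l, ν) ↔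
        Reachable (INV T).initStates (TS (INV T)) (fINV T (l, ν)) := fun l ν =>
  (Reachable.map_iff (fINV_injective T) (image_fINV_initStates T) (TS_INV_fINV_iff T hu)
    (l, ν)).symm

/-- a state `(l,ν)` is reachable in `TS'(TA)` iff `f((l,ν))` is
reachable in `TS(INV(TA))`. -/
theorem statement_6 {L A C : Type} [Fintype L] [Fintype A] [Fintype C] [Nonempty C]
    (T : TA L A C) (hu : T.urgent = ∅) :
    ∀ (l : L) (ν : Val C),
      Reachable T.initStates (TS' T) (l, ν) ↔
        Reachable (INV T).initStates (TS (INV T)) (fINV T (l, ν)) :=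
  statement_6_general T hu
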